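/- arXiv:1106.4238 — 5 statements merged into one kernel-verified Lean document; each statement's English description precedes it below -/
import Mathlib

section
/- Fix a positive integer a. Define for each integer m ≥ 1 the real number W(m,a) = (m / ((a+1)·((m-1)·a + m))) · binomial((m-1)²·a + (m-1)·m, a). Then the sequence m ↦ (a!·(a+1)! / m^(2a)) · W(m,a) converges, as m → ∞, to a!·(a+1)^(a-1) (equivalently (a+1)!·(a+1)^(a-2)). In the paper this computes the Euler characteristic χ(Q¹(a,a+1)) of the moduli of stable representations of the complete bipartite quiver Q¹(a,a+1) as the limit lim_{m→∞} χ(K^m(a,a+1))·a!·(a+1)!/m^(2a), using Weist's closed formula W(m,a) for χ(K^m(a,a+1)). -/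
/-!
With `N m = (m-1)²a + (m-1)m ~ (a+1)m²`, the falling factorial `a! · binom(N m, a)` behaves like
`((a+1)m²)^a`, while the prefactor `m / ((a+1)((m-1)a+m))` tends to `1/(a+1)²`; so the limit is
`(a+1)! (a+1)^(a-2) = a! (a+1)^(a-1)`.
-/

open Filter Real

/-- Weist's closed formula `W(m,a)` for `χ(K^m(a,a+1))`, as a real number. -/
noncomputable def W (m a : ℕ) : ℝ :=
  ((m : ℝ) / (((a : ℝ) + 1) * (((m : ℝ) - 1) * a + m))) *
    (Nat.choose ((m - 1) ^ 2 * a + (m - 1) * m) a : ℝ)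

open Finset Topology

lemma tendsto_descPochhammer_eval_div_pow {α : Type*} {l : Filter α} {x s : α → ℝ} {c : ℝ}
    (k : ℕ) (hs : Tendsto s l atTop) (hx : Tendsto (fun t => x t / s t) l (𝓝 c)) :
    Tendsto (fun t => (descPochhammer ℝ k).eval (x t) / s t ^ k) l (𝓝 (c ^ k)) := by
  have hfactor (j : ℕ) : Tendsto (fun t => (x t - j) / s t) l (𝓝 c) := by
    simpa only [sub_div, sub_zero] using hx.sub (tendsto_const_nhds.div_atTop hs)
  have hprod := tendsto_finsetProd (range k) fun j _ => hfactor j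
  simp only [prod_const, card_range] at hprod
  simpa only [descPochhammer_eval_eq_prod_range, prod_div_distrib, prod_const, card_range]
    using hprod

lemma tendsto_one_sub_one_div_nat : Tendsto (fun m : ℕ => 1 - 1 / (m : ℝ)) atTop (𝓝 1) := by
  simpa only [sub_zero] using
    (tendsto_const_nhds (x := (1 : ℝ))).sub tendsto_one_div_atTop_nhds_zero_nat

lemma tendsto_sub_one_mul_add_div (a : ℝ) :
    Tendsto (fun m : ℕ => (((m : ℝ) - 1) * a + m) / m) atTop (𝓝 (a + 1)) := by
  have h := (tendsto_one_sub_one_div_nat.mul_const a).add_const 1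
  rw [one_mul] at h
  refine h.congr' ?_
  filter_upwards [eventually_ne_atTop 0] with m hm
  field_simp

lemma tendsto_weist_choose_top_div_sq (a : ℕ) :
    Tendsto (fun m : ℕ => (((m - 1) ^ 2 * a + (m - 1) * m : ℕ) : ℝ) / (m : ℝ) ^ 2) atTop
      (𝓝 (a + 1)) := by
  have h :=
    ((tendsto_one_sub_one_div_nat.pow 2).mul_const (a : ℝ)).add tendsto_one_sub_one_div_nat
  rw [one_pow, one_mul] at h
  refine h.congr' ?_
  filter_upwards [eventually_ge_atTop 1] with m hm
  have hm0 : (m : ℝ) ≠ 0 := by positivity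
  push_cast [Nat.cast_sub hm]
  field_simp

/-- `χ(Q¹(a,a+1)) = lim_{m→∞} χ(K^m(a,a+1))·a!·(a+1)!/m^(2a) = a!·(a+1)^(a-1)`. -/
theorem chi_Q1_a_aplus1 (a : ℕ) (ha : 0 < a) :
    Tendsto (fun m : ℕ =>
        ((Nat.factorial a : ℝ) * (Nat.factorial (a + 1) : ℝ) / (m : ℝ) ^ (2 * a)) * W m a)
      atTop (nhds ((Nat.factorial a : ℝ) * ((a : ℝ) + 1) ^ (a - 1))) := by
  have hprefactor : Tendsto (fun m : ℕ => (m : ℝ) / (((a : ℝ) + 1) * (((m : ℝ) - 1) * a + m)))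
      atTop (𝓝 (((a : ℝ) + 1)⁻¹ * ((a : ℝ) + 1)⁻¹)) := by
    refine ((tendsto_sub_one_mul_add_div a).inv₀ (by positivity)).const_mul _ |>.congr fun m => ?_
    rw [inv_div, mul_div_assoc', inv_mul_eq_div, div_div]
  have hfalling := tendsto_descPochhammer_eval_div_pow a
    ((tendsto_pow_atTop two_ne_zero).comp tendsto_natCast_atTop_atTop)
    (tendsto_weist_choose_top_div_sq a)
  have hvalue : ((a + 1).factorial : ℝ) * (((a : ℝ) + 1)⁻¹ * ((a : ℝ) + 1)⁻¹) * ((a : ℝ) + 1) ^ a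
      = a.factorial * ((a : ℝ) + 1) ^ (a - 1) := by
    obtain ⟨b, rfl⟩ := Nat.exists_eq_add_of_lt ha
    rw [Nat.factorial_succ]
    push_cast
    field_simp
    ring
  rw [← hvalue]
  refine (hprefactor.const_mul _ |>.mul hfalling).congr fun m => ?_
  have hfac : (a.factorial : ℝ) ≠ 0 := by positivity
  rw [W, Nat.cast_choose_eq_descPochhammer_div, pow_mul]
  field_simp
  rfl
end

section
/- Fix a positive integer a. Define for each integer m ≥ 2 the real number W(m,a) = (m / ((a+1)·((m-1)·a + m))) · binomial((m-1)²·a + (m-1)·m, a). Then lim_{m→∞} ln(W(m,a)) / ln(m) = 2a. This is the instance b = a+1 of the paper's Corollary: for fixed coprime (a,b) and m → ∞, ln χ(K^m(a,b)) ∼ (a+b−1)·ln m. -/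
/-!
`W(m,a)` is the prefactor `m / ((a+1)((m-1)a+m))`, which lies between `1/(a+1)²` and `1`, times
`C(N,a)` with `N = (m-1)²a + (m-1)m`. Since `m²/2 ≤ N+1-a` and `N ≤ (a+1)m²`, the bounds
`(N+1-a)^a / a! ≤ C(N,a) ≤ N^a` give `W(m,a) ≍ m^(2a)`, and taking logarithms the bounded
constants disappear after division by `log m`.
-/

open Filter Real Topology

theorem tendsto_log_div_log_of_le_of_le {α : Type*} {l : Filter α} {f g : α → ℝ}
    {c₁ c₂ k : ℝ} (hg : Tendsto g l atTop) (hc₁ : 0 < c₁)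
    (hlo : ∀ᶠ x in l, c₁ * g x ^ k ≤ f x) (hhi : ∀ᶠ x in l, f x ≤ c₂ * g x ^ k) :
    Tendsto (fun x => log (f x) / log (g x)) l (𝓝 k) := by
  have hlog : Tendsto (fun x => log (g x)) l atTop := tendsto_log_atTop.comp hg
  have hconst (c : ℝ) : Tendsto (fun x => k + c / log (g x)) l (𝓝 k) := by
    simpa using tendsto_const_nhds.add (tendsto_const_nhds.div_atTop hlog)
  have hg1 : ∀ᶠ x in l, 1 < g x := hg.eventually_gt_atTop 1
  refine tendsto_of_tendsto_of_tendsto_of_le_of_le' (hconst (log c₁)) (hconst (log c₂)) ?_ ?_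
  · filter_upwards [hg1, hlo] with x hx hfx
    have hL : 0 < log (g x) := log_pos hx
    have hgk : 0 < g x ^ k := rpow_pos_of_pos (by linarith) k
    have h := log_le_log (mul_pos hc₁ hgk) hfx
    rw [log_mul hc₁.ne' hgk.ne', log_rpow (by linarith)] at h
    rw [le_div_iff₀ hL, add_mul, div_mul_cancel₀ _ hL.ne']
    linarith
  · filter_upwards [hg1, hlo, hhi] with x hx hfx hfx'
    have hL : 0 < log (g x) := log_pos hx
    have hgk : 0 < g x ^ k := rpow_pos_of_pos (by linarith) k
    have hf : 0 < f x := (mul_pos hc₁ hgk).trans_le hfx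
    have hc₂ : 0 < c₂ := pos_of_mul_pos_left (hf.trans_le hfx') hgk.le
    have h := log_le_log hf hfx'
    rw [log_mul hc₂.ne' hgk.ne', log_rpow (by linarith)] at h
    rw [div_le_iff₀ hL, add_mul, div_mul_cancel₀ _ hL.ne']
    linarith

section Weist

variable (a : ℕ) {m : ℕ}

theorem weist_prefactor_le_one (hm : 1 ≤ m) :
    (m : ℝ) / (((a : ℝ) + 1) * (((m : ℝ) - 1) * a + m)) ≤ 1 := by
  have hm' : (1 : ℝ) ≤ m := by exact_mod_cast hm
  have ha : (0 : ℝ) ≤ a := a.cast_nonneg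
  have hma : 0 ≤ ((m : ℝ) - 1) * a := mul_nonneg (by linarith) ha
  exact div_le_one_of_le₀ (by nlinarith) (by positivity)

theorem inv_sq_le_weist_prefactor (hm : 1 ≤ m) :
    1 / ((a : ℝ) + 1) ^ 2 ≤ (m : ℝ) / (((a : ℝ) + 1) * (((m : ℝ) - 1) * a + m)) := by
  have hm' : (1 : ℝ) ≤ m := by exact_mod_cast hm
  have ha : (0 : ℝ) ≤ a := a.cast_nonneg
  have hma : 0 ≤ ((m : ℝ) - 1) * a := mul_nonneg (by linarith) ha
  rw [div_le_div_iff₀ (by positivity) (by positivity)]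
  nlinarith

theorem choose_weist_le :
    Nat.choose ((m - 1) ^ 2 * a + (m - 1) * m) a ≤ (a + 1) ^ a * m ^ (2 * a) := by
  have hN : (m - 1) ^ 2 * a + (m - 1) * m ≤ (a + 1) * m ^ 2 := by
    have h := Nat.sub_le m 1
    nlinarith [Nat.mul_le_mul h h, Nat.mul_le_mul_right m h]
  calc Nat.choose ((m - 1) ^ 2 * a + (m - 1) * m) a
      ≤ ((m - 1) ^ 2 * a + (m - 1) * m) ^ a := Nat.choose_le_pow _ _
    _ ≤ ((a + 1) * m ^ 2) ^ a := Nat.pow_le_pow_left hN a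
    _ = (a + 1) ^ a * m ^ (2 * a) := by rw [mul_pow, pow_mul]

theorem pow_le_choose_weist (hm : 2 ≤ m) :
    m ^ (2 * a) ≤ 2 ^ a * a.factorial * Nat.choose ((m - 1) ^ 2 * a + (m - 1) * m) a := by
  set N := (m - 1) ^ 2 * a + (m - 1) * m
  have hsq : m ^ 2 ≤ 2 * (N + 1 - a) := by
    obtain ⟨k, rfl⟩ := Nat.exists_eq_add_of_le hm
    have hk : 2 + k - 1 = k + 1 := by omega
    have hN : N = (k + 1) ^ 2 * a + (k + 1) * (k + 2) := by simp only [N, hk]; ring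
    have ha : a ≤ (k + 1) ^ 2 * a := Nat.le_mul_of_pos_left a (by positivity)
    have : (2 + k) ^ 2 ≤ 2 * ((k + 1) * (k + 2) + 1) := by nlinarith
    omega
  calc m ^ (2 * a) = (m ^ 2) ^ a := pow_mul m 2 a
    _ ≤ (2 * (N + 1 - a)) ^ a := Nat.pow_le_pow_left hsq a
    _ = 2 ^ a * (N + 1 - a) ^ a := mul_pow _ _ _
    _ ≤ 2 ^ a * N.descFactorial a := Nat.mul_le_mul_left _ (Nat.pow_sub_le_descFactorial N a)
    _ = 2 ^ a * a.factorial * N.choose a := by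
      rw [Nat.descFactorial_eq_factorial_mul_choose, mul_assoc]

theorem W_le (hm : 1 ≤ m) : W m a ≤ ((a : ℝ) + 1) ^ a * (m : ℝ) ^ (2 * a) := by
  have hC : (Nat.choose ((m - 1) ^ 2 * a + (m - 1) * m) a : ℝ)
      ≤ ((a : ℝ) + 1) ^ a * (m : ℝ) ^ (2 * a) := by exact_mod_cast choose_weist_le a
  calc W m a ≤ 1 * (((a : ℝ) + 1) ^ a * (m : ℝ) ^ (2 * a)) :=
        mul_le_mul (weist_prefactor_le_one a hm) hC (by positivity) zero_le_one
    _ = _ := one_mul _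

theorem le_W (hm : 2 ≤ m) :
    1 / (((a : ℝ) + 1) ^ 2 * (2 ^ a * a.factorial)) * (m : ℝ) ^ (2 * a) ≤ W m a := by
  have hC : (m : ℝ) ^ (2 * a) / (2 ^ a * a.factorial)
      ≤ (Nat.choose ((m - 1) ^ 2 * a + (m - 1) * m) a : ℝ) := by
    rw [div_le_iff₀' (by positivity)]
    exact_mod_cast pow_le_choose_weist a hm
  have hP := inv_sq_le_weist_prefactor a (m := m) (by omega)
  calc 1 / (((a : ℝ) + 1) ^ 2 * (2 ^ a * a.factorial)) * (m : ℝ) ^ (2 * a)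
      = 1 / ((a : ℝ) + 1) ^ 2 * ((m : ℝ) ^ (2 * a) / (2 ^ a * a.factorial)) := by
        rw [one_div_mul_eq_div, div_mul_div_comm, one_mul, mul_comm]
    _ ≤ W m a := mul_le_mul hP hC (by positivity) ((by positivity : (0 : ℝ) < _).le.trans hP)

end Weist

theorem log_chi_asymp_general (a : ℕ) :
    Tendsto (fun m : ℕ => Real.log (W m a) / Real.log m)
      atTop (nhds (2 * (a : ℝ))) := by
  have hpow (m : ℕ) : (m : ℝ) ^ (2 * (a : ℝ)) = (m : ℝ) ^ (2 * a) := by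
    rw [← rpow_natCast]; push_cast; rfl
  refine tendsto_log_div_log_of_le_of_le tendsto_natCast_atTop_atTop
    (c₁ := 1 / (((a : ℝ) + 1) ^ 2 * (2 ^ a * a.factorial))) (c₂ := ((a : ℝ) + 1) ^ a)
    (by positivity) ?_ ?_
  · filter_upwards [eventually_ge_atTop 2] with m hm
    rw [hpow]
    exact le_W a hm
  · filter_upwards [eventually_ge_atTop 1] with m hm
    rw [hpow]
    exact W_le a hm

/-- `lim_{m→∞} ln(W(m,a)) / ln(m) = 2a`, the case `b = a+1` of
`ln χ(K^m(a,b)) ∼ (a+b−1)·ln m`. -/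
theorem log_chi_asymp (a : ℕ) (ha : 0 < a) :
    Tendsto (fun m : ℕ => Real.log (W m a) / Real.log m)
      atTop (nhds (2 * (a : ℝ))) :=
  log_chi_asymp_general a
end

section
/- For all integers m ≥ 2 and a ≥ 1, the integer (a+1)·((m−1)·a + m) divides m · binomial((m−1)²·a + (m−1)·m, a), and the quotient m · binomial((m−1)²·a + (m−1)·m, a) / ((a+1)·((m−1)·a + m)) is a positive integer. (This quotient is Weist's closed formula for the Euler characteristic χ(K^m(a,a+1)) of the nonempty moduli space of stable representations of the m-Kronecker quiver of dimension vector (a, a+1), hence it is a positive integer.) -/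
/-!
Put `n = m - 1`, `s = n * a + n + 1` and `N = n * s`, so that the binomial coefficient is
`C = N.choose a`. The two factors `a + 1` and `s` are coprime, since `s = n * (a + 1) + 1`.
The factor `a + 1` divides `(N + 1) * C`, and `N + 1 = n ^ 2 * (a + 1) + (n + 1)`; the factor `s`
divides `N`, hence `a * C`, and `(n + 1) * C = s * C - n * (a * C)`. Positivity holds because `a ≤ N`.
-/

namespace Nat

theorem add_one_dvd_add_one_mul_choose (n k : ℕ) : k + 1 ∣ (n + 1) * n.choose k :=
  Dvd.intro_left _ (add_one_mul_choose_eq n k).symm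

theorem dvd_mul_choose : ∀ n k : ℕ, n ∣ k * n.choose k
  | 0, 0 => by simp
  | 0, _ + 1 => by simp
  | _, 0 => by simp
  | n + 1, k + 1 => ⟨n.choose k, by rw [add_one_mul_choose_eq, mul_comm]⟩

theorem add_one_mul_dvd_add_one_mul_choose (n a : ℕ) :
    (a + 1) * (n * a + n + 1) ∣ (n + 1) * (n * (n * a + n + 1)).choose a := by
  set s := n * a + n + 1
  set C := (n * s).choose a
  have hcop : Coprime (a + 1) s := by
    rw [show s = 1 + (a + 1) * n by simp only [s]; ring, coprime_add_mul_left_right]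
    exact coprime_one_right _
  have hdvd_left : a + 1 ∣ (n + 1) * C := by
    have h := add_one_dvd_add_one_mul_choose (n * s) a
    rw [show (n * s + 1) * C = (a + 1) * (n ^ 2 * C) + (n + 1) * C by simp only [s]; ring] at h
    exact (Nat.dvd_add_right (dvd_mul_right _ _)).1 h
  have hdvd_right : s ∣ (n + 1) * C := by
    have h : s ∣ n * (a * C) := ((dvd_mul_left s n).trans (dvd_mul_choose _ a)).mul_left n
    have hsum : s ∣ n * (a * C) + (n + 1) * C :=
      ⟨C, by simp only [s]; ring⟩
    exact (Nat.dvd_add_right h).1 hsum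
  exact hcop.mul_dvd_of_dvd_of_dvd hdvd_left hdvd_right

end Nat

theorem weist_integrality_general (m a : ℕ) (hm : 2 ≤ m) :
    ((a + 1) * ((m - 1) * a + m)) ∣ (m * Nat.choose ((m - 1) ^ 2 * a + (m - 1) * m) a) ∧
      0 < m * Nat.choose ((m - 1) ^ 2 * a + (m - 1) * m) a / ((a + 1) * ((m - 1) * a + m)) := by
  obtain ⟨n, rfl⟩ : ∃ n, m = n + 1 := ⟨m - 1, by omega⟩
  have hn : 1 ≤ n := by omega
  rw [Nat.add_sub_cancel, ← add_assoc,
    show n ^ 2 * a + n * (n + 1) = n * (n * a + n + 1) by ring]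
  have ha : a ≤ n * (n * a + n + 1) :=
    calc a ≤ n * a := Nat.le_mul_of_pos_left a hn
      _ ≤ n * a + n + 1 := by omega
      _ ≤ n * (n * a + n + 1) := Nat.le_mul_of_pos_left _ hn
  have hdvd := Nat.add_one_mul_dvd_add_one_mul_choose n a
  have hpos : 0 < (n + 1) * (n * (n * a + n + 1)).choose a :=
    Nat.mul_pos n.succ_pos (Nat.choose_pos ha)
  exact ⟨hdvd, Nat.div_pos (Nat.le_of_dvd hpos hdvd) (by positivity)⟩

/-- Weist's formula gives a positive integer: `(a+1)·((m−1)·a+m)` divides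
`m·C((m−1)²·a+(m−1)·m, a)`, and the quotient is positive. -/
theorem weist_integrality (m a : ℕ) (hm : 2 ≤ m) (ha : 1 ≤ a) :
    ((a + 1) * ((m - 1) * a + m)) ∣ (m * Nat.choose ((m - 1) ^ 2 * a + (m - 1) * m) a) ∧
      0 < m * Nat.choose ((m - 1) ^ 2 * a + (m - 1) * m) a / ((a + 1) * ((m - 1) * a + m)) :=
  weist_integrality_general m a hm
end

section
/- Fix an integer m ≥ 3 and set c = (m−1)². Define for each integer a ≥ 1 the real number W(m,a) = (m / ((a+1)·((m−1)·a + m))) · binomial((m−1)²·a + (m−1)·m, a). Then lim_{a→∞} ln(W(m,a)) / a = c·ln(c) − (c−1)·ln(c−1). (This is the value of the Douglas growth ratio lim_{a→∞} ln χ(K^m(a,a+1))/a determined from Weist's explicit formula; it corresponds to slope ratio r = b/a → 1.) -/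
/-!
Write `W m a = P(a) · C(N, a)` with `N = (m-1)² a + (m-1) m` and `P` a rational function of `a`,
so that `log P(a) / a → 0`. By Stirling, `log n! = n log n - n + o(n)`, hence for `n`, `k`, `n - k`
growing linearly in `a` the binomial satisfies
`log C(n, k) / a = φ(n/a) - φ(k/a) - φ((n-k)/a) + o(1)` with `φ x = x log x`: the `log a` terms
cancel because `n = k + (n - k)`. Continuity of `φ` and `N / a → (m-1)²`, `a / a → 1` finish.
-/

open Filter Real

open Topology
open scoped Nat

lemma tendsto_log_div_natCast_of_tendsto_div {u : ℕ → ℝ} {L : ℝ} (hL : 0 < L)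
    (h : Tendsto (fun a : ℕ => u a / a) atTop (𝓝 L)) :
    Tendsto (fun a : ℕ => log (u a) / a) atTop (𝓝 0) := by
  have hu : Tendsto u atTop atTop := tendsto_natCast_atTop_atTop.num hL h
  have hlog : Tendsto (fun a => log (u a) / u a) atTop (𝓝 0) :=
    isLittleO_log_id_atTop.tendsto_div_nhds_zero.comp hu
  rw [← zero_mul L]
  refine (hlog.mul h).congr' ?_
  filter_upwards [hu.eventually_gt_atTop 0] with a ha
  field_simp

lemma tendsto_affine_div_natCast (p q : ℝ) :
    Tendsto (fun a : ℕ => (p * a + q) / a) atTop (𝓝 p) := by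
  rw [← add_zero p]
  refine (tendsto_const_nhds.add (tendsto_const_div_atTop_nhds_zero_nat q)).congr' ?_
  filter_upwards [eventually_ne_atTop 0] with a ha
  field_simp
  ring

lemma tendsto_log_affine_div_natCast {p : ℝ} (hp : 0 < p) (q : ℝ) :
    Tendsto (fun a : ℕ => log (p * a + q) / a) atTop (𝓝 0) :=
  tendsto_log_div_natCast_of_tendsto_div hp (tendsto_affine_div_natCast p q)

lemma log_factorial_eq_log_stirlingSeq_add {n : ℕ} (hn : n ≠ 0) :
    log n ! = log (Stirling.stirlingSeq n) + log (2 * n) / 2 + (n * log n - n) := by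
  rw [Stirling.log_stirlingSeq_formula, log_div (by positivity) (exp_ne_zero 1), log_exp]
  ring

lemma tendsto_log_factorial_sub_div :
    Tendsto (fun n : ℕ => (log n ! - (n * log n - n)) / n) atTop (𝓝 0) := by
  have hstirling : Tendsto (fun n : ℕ => log (Stirling.stirlingSeq n) / n) atTop (𝓝 0) :=
    ((continuousAt_log (by positivity)).tendsto.comp
      Stirling.tendsto_stirlingSeq_sqrt_pi).div_atTop tendsto_natCast_atTop_atTop
  have hsqrt := (tendsto_log_affine_div_natCast two_pos 0).div_const 2
  have h := hstirling.add hsqrt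
  rw [zero_div, add_zero] at h
  refine h.congr' ?_
  filter_upwards [eventually_ne_atTop 0] with n hn
  rw [log_factorial_eq_log_stirlingSeq_add hn, add_zero]
  ring

lemma tendsto_log_factorial_sub_div_of_tendsto_div {n : ℕ → ℕ} {α : ℝ} (hα : 0 < α)
    (h : Tendsto (fun a : ℕ => (n a : ℝ) / a) atTop (𝓝 α)) :
    Tendsto (fun a : ℕ => (log (n a)! - (n a * log (n a) - n a)) / a) atTop (𝓝 0) := by
  have hn : Tendsto n atTop atTop :=
    tendsto_natCast_atTop_iff.mp (tendsto_natCast_atTop_atTop.num hα h)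
  rw [← zero_mul α]
  refine ((tendsto_log_factorial_sub_div.comp hn).mul h).congr' ?_
  filter_upwards [hn.eventually_ne_atTop 0] with a ha
  simp only [Function.comp_apply]
  field_simp

lemma div_mul_log_div_eq (x : ℝ) {a : ℝ} (ha : 0 < a) :
    x / a * log (x / a) = x * log x / a - x / a * log a := by
  rcases eq_or_ne x 0 with rfl | hx
  · simp
  rw [log_div hx ha.ne']
  field_simp

lemma log_choose_eq {n k : ℕ} (hkn : k ≤ n) :
    log (n.choose k) = log n ! - log k ! - log (n - k)! := by
  rw [Nat.cast_choose ℝ hkn, log_div (by positivity) (by positivity),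
    log_mul (by positivity) (by positivity)]
  ring

theorem tendsto_log_choose_div {n k : ℕ → ℕ} {α β : ℝ} (hβ : 0 < β) (hβα : β < α)
    (hkn : ∀ a, k a ≤ n a)
    (hn : Tendsto (fun a : ℕ => (n a : ℝ) / a) atTop (𝓝 α))
    (hk : Tendsto (fun a : ℕ => (k a : ℝ) / a) atTop (𝓝 β)) :
    Tendsto (fun a : ℕ => log ((n a).choose (k a)) / a) atTop
      (𝓝 (α * log α - β * log β - (α - β) * log (α - β))) := by
  have hl : Tendsto (fun a : ℕ => ((n a - k a : ℕ) : ℝ) / a) atTop (𝓝 (α - β)) := by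
    refine (hn.sub hk).congr fun a => ?_
    rw [Nat.cast_sub (hkn a), sub_div]
  have hmain := ((continuous_mul_log.tendsto α).comp hn).sub
    ((continuous_mul_log.tendsto β).comp hk) |>.sub ((continuous_mul_log.tendsto _).comp hl)
  have herr := (tendsto_log_factorial_sub_div_of_tendsto_div (hβ.trans hβα) hn).sub
    (tendsto_log_factorial_sub_div_of_tendsto_div hβ hk) |>.sub
    (tendsto_log_factorial_sub_div_of_tendsto_div (sub_pos.2 hβα) hl)
  have h := herr.add hmain
  rw [sub_self, sub_self, zero_add] at h
  refine h.congr' ?_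
  filter_upwards [eventually_gt_atTop 0] with a ha
  have ha' : (0 : ℝ) < a := Nat.cast_pos.2 ha
  have hsum : (n a : ℝ) = k a + (n a - k a : ℕ) := by rw [Nat.cast_sub (hkn a)]; ring
  simp only [Function.comp_apply]
  rw [log_choose_eq (hkn a), div_mul_log_div_eq _ ha', div_mul_log_div_eq _ ha',
    div_mul_log_div_eq _ ha', hsum]
  field_simp
  ring

lemma le_pred_sq_mul_add {m : ℕ} (hm : 1 < m) (a : ℕ) : a ≤ (m - 1) ^ 2 * a + (m - 1) * m :=
  le_add_right (Nat.le_mul_of_pos_left a (pow_pos (by omega) 2))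

lemma log_W_eq {m : ℕ} (hm : 1 < m) (a : ℕ) :
    log (W m a) = log m - log ((a : ℝ) + 1) - log (((m : ℝ) - 1) * a + m)
      + log (((m - 1) ^ 2 * a + (m - 1) * m).choose a : ℝ) := by
  have hm' : (1 : ℝ) ≤ m := by exact_mod_cast hm.le
  have hlinear : (0 : ℝ) < (m - 1) * a + m := by positivity
  have hchoose : 0 < ((m - 1) ^ 2 * a + (m - 1) * m).choose a :=
    Nat.choose_pos (le_pred_sq_mul_add hm a)
  rw [W, log_mul (by positivity) (by positivity), log_div (by positivity) (by positivity),
    log_mul (by positivity) hlinear.ne']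
  ring

lemma tendsto_log_W_prefactor_div {m : ℕ} (hm : 1 < m) :
    Tendsto (fun a : ℕ => (log m - log ((a : ℝ) + 1) - log (((m : ℝ) - 1) * a + m)) / a)
      atTop (𝓝 0) := by
  have hm' : (1 : ℝ) < m := by exact_mod_cast hm
  have h := ((tendsto_const_div_atTop_nhds_zero_nat (log m)).sub
    (tendsto_log_affine_div_natCast one_pos 1)).sub
    (tendsto_log_affine_div_natCast (sub_pos.2 hm') m)
  rw [sub_self, sub_self] at h
  simpa only [one_mul, sub_div] using h

/-- The Douglas growth ratio at slope `r = 1`: for fixed `m ≥ 3` and `c = (m−1)²`,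
`lim_{a→∞} ln(W(m,a))/a = c·ln c − (c−1)·ln(c−1)`. -/
theorem douglas_growth_ratio (m : ℕ) (hm : 3 ≤ m) :
    Tendsto (fun a : ℕ => Real.log (W m a) / (a : ℝ)) atTop
      (nhds ((((m : ℝ) - 1) ^ 2) * Real.log (((m : ℝ) - 1) ^ 2) -
        ((((m : ℝ) - 1) ^ 2) - 1) * Real.log ((((m : ℝ) - 1) ^ 2) - 1))) := by
  have hm' : (3 : ℝ) ≤ m := by exact_mod_cast hm
  have htop : Tendsto (fun a : ℕ => (((m - 1) ^ 2 * a + (m - 1) * m : ℕ) : ℝ) / a) atTop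
      (𝓝 (((m : ℝ) - 1) ^ 2)) := by
    refine (tendsto_affine_div_natCast _ (((m : ℝ) - 1) * m)).congr fun a => ?_
    push_cast [Nat.cast_sub (by omega : 1 ≤ m)]
    ring
  have hone : Tendsto (fun a : ℕ => (a : ℝ) / a) atTop (𝓝 1) := by
    simpa using tendsto_affine_div_natCast 1 0
  have h := (tendsto_log_W_prefactor_div (m := m) (by omega)).add
    (tendsto_log_choose_div one_pos (by nlinarith) (le_pred_sq_mul_add (by omega)) htop hone)
  simp only [zero_add, log_one, mul_zero, sub_zero] at h
  refine h.congr fun a => ?_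
  rw [log_W_eq (by omega), add_div]
end

section
/- Fix a positive integer a. Define for each integer m ≥ 1 the real number W(m,a) = (m / ((a+1)·((m−1)·a + m))) · binomial((m−1)²·a + (m−1)·m, a). Then lim_{m→∞} a! · W(m,a) / m^(2a) = (a+1)^(a−2) (as a real number; for a = 1 this value is 1/2). Equivalently, χ(K^m(a,a+1)) is asymptotic, as m → ∞, to (a+1)^(a−2) · m^(2a) / a!, the first-order approximation in m of the Euler characteristic of the m-Kronecker quiver moduli provided by the MPS formula. -/
/-!
Writing `a! · binomial(N, a) = ∏_{i<a} (N - i)` and dividing each of the `a` factors by `m²`,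
the quantity `a! · W(m,a) / m^(2a)` becomes a rational function of `t = 1/m` which is continuous
at `t = 0`. Its value there is `(a+1)⁻² · (a+1)^a`: the prefactor tends to `1/(a+1)²` and each
factor `((m-1)²a + (m-1)m - i)/m²` tends to `a + 1`.
-/

open Filter Real

open Finset

theorem Nat.cast_factorial_mul_choose {R : Type*} [CommRing R] (n k : ℕ) :
    (k.factorial * n.choose k : R) = ∏ j ∈ range k, ((n : R) - j) := by
  rw [← Nat.cast_mul, ← Nat.descFactorial_eq_factorial_mul_choose,
    ← descPochhammer_eval_eq_descFactorial, descPochhammer_eval_eq_prod_range]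

noncomputable def rescaledW (a : ℕ) (t : ℝ) : ℝ :=
  ((a + 1) * ((1 - t) * a + 1))⁻¹ * ∏ i ∈ range a, ((1 - t) ^ 2 * a + (1 - t) - i * t ^ 2)

theorem continuousAt_rescaledW_zero (a : ℕ) : ContinuousAt (rescaledW a) 0 := by
  unfold rescaledW
  fun_prop (disch := norm_num; positivity)

theorem rescaledW_zero (a : ℕ) : rescaledW a 0 = ((a : ℝ) + 1) ^ ((a : ℤ) - 2) := by
  have : ((a : ℝ) + 1) ≠ 0 := by positivity
  simp [rescaledW, zpow_sub₀ this, div_eq_inv_mul, sq]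

theorem factorial_mul_W_div_pow_eq_rescaledW (a : ℕ) {m : ℕ} (hm : m ≠ 0) :
    (a.factorial : ℝ) * W m a / (m : ℝ) ^ (2 * a) = rescaledW a (m : ℝ)⁻¹ := by
  have hm0 : (m : ℝ) ≠ 0 := by exact_mod_cast hm
  have hN : (((m - 1) ^ 2 * a + (m - 1) * m : ℕ) : ℝ)
      = ((m : ℝ) - 1) ^ 2 * a + ((m : ℝ) - 1) * m := by
    push_cast [Nat.one_le_iff_ne_zero.mpr hm]
    ring
  have hpow : (m : ℝ) ^ (2 * a) = ∏ _i ∈ range a, (m : ℝ) ^ 2 := by simp [pow_mul]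
  rw [W, rescaledW, mul_left_comm, Nat.cast_factorial_mul_choose, hN, mul_div_assoc, hpow,
    ← prod_div_distrib]
  congr 1
  · field_simp
  · refine prod_congr rfl fun i _ => ?_
    field_simp

theorem first_order_approx_general (a : ℕ) :
    Tendsto (fun m : ℕ => (Nat.factorial a : ℝ) * W m a / (m : ℝ) ^ (2 * a))
      atTop (nhds (((a : ℝ) + 1) ^ ((a : ℤ) - 2))) := by
  have hlim : Tendsto (fun m : ℕ => rescaledW a (m : ℝ)⁻¹) atTop (nhds (rescaledW a 0)) :=
    (continuousAt_rescaledW_zero a).tendsto.comp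
      (tendsto_inv_atTop_zero.comp tendsto_natCast_atTop_atTop)
  rw [← rescaledW_zero]
  refine hlim.congr' ?_
  filter_upwards [eventually_ne_atTop 0] with m hm
  exact (factorial_mul_W_div_pow_eq_rescaledW a hm).symm

/-- First-order approximation in `m`: `lim_{m→∞} a!·W(m,a)/m^(2a) = (a+1)^(a−2)`
(integer power, so `1/2` when `a = 1`). -/
theorem first_order_approx (a : ℕ) (ha : 0 < a) :
    Tendsto (fun m : ℕ => (Nat.factorial a : ℝ) * W m a / (m : ℝ) ^ (2 * a))
      atTop (nhds (((a : ℝ) + 1) ^ ((a : ℤ) - 2))) :=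
  first_order_approx_general a
end
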